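/- Let G be a finite connected graph with edge set L, let Ω ⊆ {0,1}^L be the set of incidence vectors of spanning trees of G, and let P = { (α, β) ∈ [0,1]^L × conv(Ω) : α ≤ β componentwise }. Then every vertex (extreme point) of the polytope P has α equal to a 0-1 incidence vector of a spanning forest of G. -/

import Mathlib

open scoped Classical

/-- Incidence vector of a graph's edge set, as a function on the edges of G. -/
noncomputable def incVec {V : Type*} (G H : SimpleGraph V) : G.edgeSet → ℝ :=
  fun e => if (e : Sym2 V) ∈ H.edgeSet then 1 else 0

/-!
An extreme point `(α, β)` of `P` is extreme in its slice `{α | 0 ≤ α ≤ β}`, a box, so each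
coordinate `α e` is `0` or `β e`. Then `(α, β) = (m * β, β)` for the `0`-`1` mask `m` of the
support of `α`, and `β' ↦ (m * β', β')` maps `conv Ω` into `P` injectively, so `β` is extreme in
`conv Ω`, i.e. the incidence vector of a spanning tree `T`; `α` is then the incidence vector of a
subgraph of `T`, which is a forest.
-/

open Set Function

section AffinePullback

variable {𝕜 E F : Type*} [Ring 𝕜] [PartialOrder 𝕜] [IsOrderedRing 𝕜]
  [AddCommGroup E] [Module 𝕜 E] [AddCommGroup F] [Module 𝕜 F]

theorem mem_extremePoints_of_injective_of_mapsTo {A : Set E} {B : Set F} {x : E}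
    (f : E →ᵃ[𝕜] F) (hf : Injective f) (hAB : MapsTo f A B) (hx : x ∈ A)
    (hfx : f x ∈ B.extremePoints 𝕜) : x ∈ A.extremePoints 𝕜 := by
  refine ⟨hx, fun x₁ h₁ x₂ h₂ hseg => ?_⟩
  have hfseg : f x ∈ openSegment 𝕜 (f x₁) (f x₂) :=
    image_openSegment 𝕜 f x₁ x₂ ▸ mem_image_of_mem f hseg
  exact hf (hfx.2 (hAB h₁) (hAB h₂) hfseg)

theorem fst_mem_extremePoints_slice {S : Set (E × F)} {p : E × F}
    (hp : p ∈ S.extremePoints 𝕜) : p.1 ∈ {x | (x, p.2) ∈ S}.extremePoints 𝕜 :=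
  mem_extremePoints_of_injective_of_mapsTo ((AffineMap.id 𝕜 E).prod (AffineMap.const 𝕜 E p.2))
    (fun _ _ h => congrArg Prod.fst h) (fun _ hx => hx) hp.1 hp

end AffinePullback

theorem apply_eq_zero_or_eq_of_mem_extremePoints_Icc {ι : Type*} {α β : ι → ℝ}
    (h : α ∈ (Icc 0 β).extremePoints ℝ) (i : ι) : α i = 0 ∨ α i = β i := by
  rw [← pi_univ_Icc, extremePoints_pi] at h
  simp only [mem_univ_pi, Pi.zero_apply] at h
  have hi := h i
  rwa [extremePoints_Icc ((extremePoints_subset hi).1.trans (extremePoints_subset hi).2)] at hi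

/-- The polytope `P` of the statement is `pairsUnder (conv Ω)`. -/
def pairsUnder {ι : Type*} (K : Set (ι → ℝ)) : Set ((ι → ℝ) × (ι → ℝ)) :=
  {p | p.2 ∈ K ∧ ∀ i, 0 ≤ p.1 i ∧ p.1 i ≤ p.2 i}

namespace pairsUnder

variable {ι : Type*} {K : Set (ι → ℝ)} {α β : ι → ℝ}

theorem slice_eq_Icc (hβ : β ∈ K) : {a | (a, β) ∈ pairsUnder K} = Icc 0 β := by
  ext a
  simp [pairsUnder, hβ, Pi.le_def, forall_and]

theorem apply_eq_zero_or_eq (h : (α, β) ∈ (pairsUnder K).extremePoints ℝ) (i : ι) :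
    α i = 0 ∨ α i = β i := by
  have := fst_mem_extremePoints_slice h
  rw [slice_eq_Icc h.1.1] at this
  exact apply_eq_zero_or_eq_of_mem_extremePoints_Icc this i

theorem snd_mem_extremePoints (hK : K ⊆ Ici 0)
    (h : (α, β) ∈ (pairsUnder K).extremePoints ℝ) : β ∈ K.extremePoints ℝ := by
  let m : ι → ℝ := fun i => if α i = 0 then 0 else 1
  have hm : ∀ i, m i = 0 ∨ m i = 1 := fun i => by unfold m; split_ifs <;> simp
  have hα : m * β = α := funext fun i => by
    rcases apply_eq_zero_or_eq h i with h0 | hβ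
    · simp [m, h0]
    · rw [Pi.mul_apply]; unfold m; split_ifs with h0 <;> simp [← hβ, h0]
  let f := ((LinearMap.mulLeft ℝ m).prod LinearMap.id).toAffineMap
  have hmaps : MapsTo f K (pairsUnder K) := fun γ hγ => ⟨hγ, fun i => by
    have : 0 ≤ γ i := hK hγ i
    rcases hm i with h0 | h1 <;> simp [f, *]⟩
  refine mem_extremePoints_of_injective_of_mapsTo f
    (fun _ _ h => congrArg Prod.snd h) hmaps h.1.1 ?_
  simpa [f, hα] using h

end pairsUnder

theorem incVec_nonneg {V : Type*} (G H : SimpleGraph V) : 0 ≤ incVec G H := fun e => by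
  unfold incVec; split_ifs <;> norm_num

theorem exists_le_incVec_eq {V : Type*} {G T : SimpleGraph V}
    {α : G.edgeSet → ℝ} (h : ∀ e, α e = 0 ∨ α e = incVec G T e) :
    ∃ F ≤ T, α = incVec G F := by
  refine ⟨T.deleteEdges {e | ∃ he : e ∈ G.edgeSet, α ⟨e, he⟩ = 0}, T.deleteEdges_le _,
    funext fun e => ?_⟩
  rcases h e with h0 | hT
  · simp [incVec, h0]
  · by_cases he : (e : Sym2 V) ∈ T.edgeSet <;> simp_all [incVec]

theorem extreme_points_are_spanning_forests_general {V : Type*}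
    (G : SimpleGraph V) :
    ∀ p ∈ Set.extremePoints ℝ
      {p : (G.edgeSet → ℝ) × (G.edgeSet → ℝ) |
        p.2 ∈ convexHull ℝ {β | ∃ T : SimpleGraph V, T ≤ G ∧ T.IsTree ∧ β = incVec G T} ∧
        ∀ e : G.edgeSet, 0 ≤ p.1 e ∧ p.1 e ≤ p.2 e},
      ∃ F : SimpleGraph V, F ≤ G ∧ F.IsAcyclic ∧ p.1 = incVec G F := by
  rintro ⟨α, β⟩ hp
  change (α, β) ∈ (pairsUnder _).extremePoints ℝ at hp
  have hnonneg : convexHull ℝ {β | ∃ T ≤ G, T.IsTree ∧ β = incVec G T} ⊆ Ici 0 :=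
    convexHull_min (fun _ ⟨T, _, _, hT⟩ => hT ▸ incVec_nonneg G T) (convex_Ici 0)
  obtain ⟨T, hTG, hT, rfl⟩ :=
    extremePoints_convexHull_subset (pairsUnder.snd_mem_extremePoints hnonneg hp)
  obtain ⟨F, hFT, rfl⟩ := exists_le_incVec_eq (pairsUnder.apply_eq_zero_or_eq hp)
  exact ⟨F, hFT.trans hTG, hT.isAcyclic.anti hFT, rfl⟩

/-- Every extreme point of the polytope
P = {(α,β) : β ∈ conv(Ω), 0 ≤ α ≤ β componentwise} has α equal to a 0-1
incidence vector of a spanning forest of G. -/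
theorem extreme_points_are_spanning_forests {V : Type*} [Fintype V]
    (G : SimpleGraph V) (hG : G.Connected) :
    ∀ p ∈ Set.extremePoints ℝ
      {p : (G.edgeSet → ℝ) × (G.edgeSet → ℝ) |
        p.2 ∈ convexHull ℝ {β | ∃ T : SimpleGraph V, T ≤ G ∧ T.IsTree ∧ β = incVec G T} ∧
        ∀ e : G.edgeSet, 0 ≤ p.1 e ∧ p.1 e ≤ p.2 e},
      ∃ F : SimpleGraph V, F ≤ G ∧ F.IsAcyclic ∧ p.1 = incVec G F :=
  extreme_points_are_spanning_forests_general G
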